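/- arXiv:1511.03547 — 5 statements merged into one kernel-verified Lean document; each statement's English description precedes it below -/
import Mathlib

section
/- Let T be a finite set of terms of S^m_d generating the monomial submodule U ⊆ S^m_d, and let M ⊆ S^m_d be a graded submodule such that for every degree s the residues of the terms in N(U)_s generate the A-module (S^m_d)_s/M_s. Then for every degree s there exists a set F ⊆ M_s of marked homogeneous elements, one element f with head term τ and supp(f − τ) ⊆ N(U) for each term τ of U of degree s, such that (S^m_d)_s = ⟨F⟩^A ⊕ ⟨N(U)_s⟩^A as A-modules. -/
/-!
Every term `τ` of `U` of degree `s` lies in `M_s + ⟨N(U)_s⟩^A`, so `τ = f_τ + ν` with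
`f_τ ∈ M` and `ν ∈ ⟨N(U)_s⟩^A`; these `f_τ` are the marked elements. Together with `N(U)_s`
they span `(S^m_d)_s` because `τ = f_τ + (τ - f_τ)`. The sum is direct because the `A`-linear
map sending each `τ` to `f_τ` and each term of `N(U)` to `0` fixes every `f_τ` (its tail lies
in `⟨N(U)⟩^A`) and kills `⟨N(U)_s⟩^A`.
-/

open MvPolynomial

namespace MB

/-- Exponent (multi-index) of a term in the variables `x_0, …, x_n`. -/
abbrev Exp (n : ℕ) := Fin (n+1) →₀ ℕ

variable {n : ℕ}

/-- Total degree of a term. -/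
def degE (α : Exp n) : ℕ := α.sum fun _ e => e

/-- `x_i` is a multiplicative variable for the term `x^α`, i.e. `x_i ≤ min(x^α)`. -/
def mult (α : Exp n) (i : Fin (n+1)) : Prop := ∀ j ∈ α.support, i ≤ j

/-- Every variable occurring in `x^δ` is multiplicative for `x^α`. -/
def multExp (α δ : Exp n) : Prop := ∀ i ∈ δ.support, mult α i

/-- Pommaret cone of a term. -/
def pommaretCone (α : Exp n) : Set (Exp n) := {γ | ∃ δ, multExp α δ ∧ γ = α + δ}

/-- A set of terms is (the set of terms of) a monomial ideal. -/
def IsMonomialIdeal (T : Set (Exp n)) : Prop := ∀ α ∈ T, ∀ β, α + β ∈ T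

/-- `P` is a Pommaret basis of the set of terms `T`: the terms of `T` are the
disjoint union of the Pommaret cones of the elements of `P`. -/
def IsPommaretBasis (P : Finset (Exp n)) (T : Set (Exp n)) : Prop :=
  (∀ γ, γ ∈ T ↔ ∃ α ∈ P, γ ∈ pommaretCone α) ∧
  ∀ γ : Exp n, ∀ α ∈ P, ∀ β ∈ P, γ ∈ pommaretCone α → γ ∈ pommaretCone β → α = β

/-- Lexicographic order on terms (with `x_n > … > x_0` significance). -/
def lexLt (η δ : Exp n) : Prop := ∃ i, η i < δ i ∧ ∀ j, i < j → η j = δ j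

/-- Terms of the saturation `(J : (x_0,…,x_n)^∞)` of a monomial ideal. -/
def satTerms (T : Set (Exp n)) : Set (Exp n) :=
  {α | ∃ j : ℕ, ∀ β : Exp n, degE β = j → α + β ∈ T}

section ModuleDefs

variable (A : Type*) [CommRing A] {κ : Type*} [Fintype κ] [DecidableEq κ]

/-- The term `x^α e_k` of the free module. -/
noncomputable def termV (α : Exp n) (k : κ) : κ → MvPolynomial (Fin (n+1)) A :=
  Pi.single k (monomial α 1)

variable {A}

/-- Homogeneity of degree `s` in `S^m_d` (with weight vector `d`). -/
def IsHomogV (d : κ → ℤ) (f : κ → MvPolynomial (Fin (n+1)) A) (s : ℤ) : Prop :=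
  ∀ k, ∀ β ∈ (f k).support, (degE β : ℤ) + d k = s

variable (A)

/-- The degree-`s` component `(S^m_d)_s` as an `A`-submodule. -/
noncomputable def homogCompV (d : κ → ℤ) (s : ℤ) :
    Submodule A (κ → MvPolynomial (Fin (n+1)) A) where
  carrier := {f | IsHomogV d f s}
  add_mem' := by
    intro f g hf hg k β hβ
    rcases Finset.mem_union.mp (MvPolynomial.support_add hβ) with h | h
    · exact hf k β h
    · exact hg k β h
  zero_mem' := by intro k β hβ; simp at hβ
  smul_mem' := by
    intro a f hf k β hβ
    exact hf k β (MvPolynomial.support_smul hβ)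

/-- The set `N(U)` of terms of `S^m_d` not belonging to the monomial module `U = ⊕ J^(k) e_k`. -/
def NUTerms (J : κ → Set (Exp n)) : Set (κ → MvPolynomial (Fin (n+1)) A) :=
  {v | ∃ k, ∃ α, α ∉ J k ∧ v = termV A α k}

/-- The degree-`s` part `N(U)_s`. -/
def NUTermsDeg (d : κ → ℤ) (J : κ → Set (Exp n)) (s : ℤ) :
    Set (κ → MvPolynomial (Fin (n+1)) A) :=
  {v | ∃ k, ∃ α, α ∉ J k ∧ (degE α : ℤ) + d k = s ∧ v = termV A α k}

variable {A}

/-- A `P(U)`-marked set: for each `x^α e_k` with `α ∈ P k`, the element `g α k` has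
head term `x^α e_k` (coefficient `1`) and all other terms in `N(U)` of the same degree. -/
def IsMarkedSetV (d : κ → ℤ) (J : κ → Set (Exp n)) (P : κ → Finset (Exp n))
    (g : Exp n → κ → (κ → MvPolynomial (Fin (n+1)) A)) : Prop :=
  ∀ k, ∀ α ∈ P k, ∀ l, ∀ β ∈ ((g α k - termV A α k) l).support,
    β ∉ J l ∧ (degE β : ℤ) + d l = (degE α : ℤ) + d k

/-- The underlying set of elements of the marked set `G`. -/
def GSet (P : κ → Finset (Exp n)) (g : Exp n → κ → (κ → MvPolynomial (Fin (n+1)) A)) :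
    Set (κ → MvPolynomial (Fin (n+1)) A) :=
  {v | ∃ k, ∃ α ∈ P k, v = g α k}

/-- The set `G^(s)` of multiplicative multiples of elements of `G` of degree `s`. -/
def GSdeg (d : κ → ℤ) (P : κ → Finset (Exp n))
    (g : Exp n → κ → (κ → MvPolynomial (Fin (n+1)) A)) (s : ℤ) :
    Set (κ → MvPolynomial (Fin (n+1)) A) :=
  {v | ∃ k, ∃ α ∈ P k, ∃ δ : Exp n, multExp α δ ∧
    (degE δ : ℤ) + (degE α : ℤ) + d k = s ∧ v = (monomial δ (1:A)) • g α k}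

/-- The `S`-submodule `⟨G⟩` generated by the marked set. -/
noncomputable def GmodS (P : κ → Finset (Exp n))
    (g : Exp n → κ → (κ → MvPolynomial (Fin (n+1)) A)) :
    Submodule (MvPolynomial (Fin (n+1)) A) (κ → MvPolynomial (Fin (n+1)) A) :=
  Submodule.span _ (GSet P g)

/-- The degree-`s` component `⟨G⟩_s` as an `A`-submodule. -/
noncomputable def GmodDeg (d : κ → ℤ) (P : κ → Finset (Exp n))
    (g : Exp n → κ → (κ → MvPolynomial (Fin (n+1)) A)) (s : ℤ) :
    Submodule A (κ → MvPolynomial (Fin (n+1)) A) :=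
  (GmodS P g).restrictScalars A ⊓ homogCompV A d s

/-- `G` is a marked basis: `(S^m_d)_s = ⟨G⟩_s ⊕ ⟨N(U)_s⟩^A` for every degree `s`. -/
def MarkedBasisProp (d : κ → ℤ) (J : κ → Set (Exp n)) (P : κ → Finset (Exp n))
    (g : Exp n → κ → (κ → MvPolynomial (Fin (n+1)) A)) : Prop :=
  ∀ s : ℤ,
    homogCompV A d s = GmodDeg d P g s ⊔ Submodule.span A (NUTermsDeg A d J s) ∧
    GmodDeg d P g s ⊓ Submodule.span A (NUTermsDeg A d J s) = ⊥

/-- One step of the reduction relation `→_G`. -/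
def RedStep (P : κ → Finset (Exp n)) (g : Exp n → κ → (κ → MvPolynomial (Fin (n+1)) A))
    (h h' : κ → MvPolynomial (Fin (n+1)) A) : Prop :=
  ∃ k, ∃ α ∈ P k, ∃ η : Exp n, multExp α η ∧
    (h k).coeff (η + α) ≠ 0 ∧
    h' = h - ((h k).coeff (η + α)) • ((monomial η (1:A)) • g α k)

end ModuleDefs

section IdealDefs

variable {A : Type*} [CommRing A]

/-- A `P(J)`-marked set of polynomials. -/
def IsMarkedSetI (T : Set (Exp n)) (P : Finset (Exp n))
    (g : Exp n → MvPolynomial (Fin (n+1)) A) : Prop :=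
  ∀ α ∈ P, ∀ β ∈ (g α - monomial α (1:A)).support, β ∉ T ∧ degE β = degE α

variable (A)

/-- The degree-`s` monomials not in `T`. -/
def NTermsDegI (T : Set (Exp n)) (s : ℕ) : Set (MvPolynomial (Fin (n+1)) A) :=
  {p | ∃ β, β ∉ T ∧ degE β = s ∧ p = monomial β (1:A)}

variable {A}

/-- Degree-`s` part of the ideal generated by the marked set. -/
noncomputable def IdealDegI (P : Finset (Exp n)) (g : Exp n → MvPolynomial (Fin (n+1)) A)
    (s : ℕ) : Submodule A (MvPolynomial (Fin (n+1)) A) :=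
  (Ideal.span (g '' ↑P)).restrictScalars A ⊓ homogeneousSubmodule (Fin (n+1)) A s

/-- A `P(J)`-marked basis of polynomials: `S_s = (G)_s ⊕ ⟨N(J)_s⟩^A` for all `s`. -/
def IsMarkedBasisI (T : Set (Exp n)) (P : Finset (Exp n))
    (g : Exp n → MvPolynomial (Fin (n+1)) A) : Prop :=
  IsMarkedSetI T P g ∧ ∀ s : ℕ,
    homogeneousSubmodule (Fin (n+1)) A s
      = IdealDegI P g s ⊔ Submodule.span A (NTermsDegI A T s) ∧
    IdealDegI P g s ⊓ Submodule.span A (NTermsDegI A T s) = ⊥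

/-- The polynomial `p` involves only multiplicative variables of `x^α`. -/
def multPoly (α : Exp n) (p : MvPolynomial (Fin (n+1)) A) : Prop :=
  ∀ β ∈ p.support, multExp α β

end IdealDefs

section SyzDefs

variable {A : Type*} [CommRing A]

/-- The map `(c_l) ↦ Σ_l c_l f_{α(l)}` whose kernel is `Syz(G)`. -/
noncomputable def syzMap (P : Finset (Exp n)) (g : Exp n → MvPolynomial (Fin (n+1)) A) :
    (↥P → MvPolynomial (Fin (n+1)) A) →ₗ[MvPolynomial (Fin (n+1)) A]
      MvPolynomial (Fin (n+1)) A where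
  toFun c := ∑ l : ↥P, c l * g l.1
  map_add' c c' := by simp [add_mul, Finset.sum_add_distrib]
  map_smul' a c := by simp [Finset.mul_sum, mul_assoc]

/-- Weight vector for the syzygy module: `d_l = deg x^{α(l)}`. -/
def ddeg (P : Finset (Exp n)) : ↥P → ℤ := fun l => (degE l.1 : ℤ)

/-- Terms of the monomial ideal generated by the nonmultiplicative variables of `x^{α(l)}`. -/
def Jsyz (P : Finset (Exp n)) : ↥P → Set (Exp n) :=
  fun l => {β | ∃ i ∈ β.support, ¬ mult (l : Exp n) i}

open Classical in
/-- The claimed Pommaret basis `{x_i e_l : x_i nonmultiplicative for x^{α(l)}}`. -/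
noncomputable def Psyz (P : Finset (Exp n)) : ↥P → Finset (Exp n) := fun l =>
  (Finset.univ.filter fun i : Fin (n+1) => ¬ mult (l : Exp n) i).image
    fun i => Finsupp.single i 1

open Classical in
/-- The syzygy `S_{k;i} = x_i e_k − Σ_l P_l^{k;i} e_l`. -/
noncomputable def Ssyz (P : Finset (Exp n))
    (Pc : ↥P → Fin (n+1) → ↥P → MvPolynomial (Fin (n+1)) A)
    (k : ↥P) (i : Fin (n+1)) : ↥P → MvPolynomial (Fin (n+1)) A :=
  fun l => (if l = k then (X i : MvPolynomial (Fin (n+1)) A) else 0) - Pc k i l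

/-- The set `G_Syz^(s)`. -/
def GSyzDeg (P : Finset (Exp n))
    (Pc : ↥P → Fin (n+1) → ↥P → MvPolynomial (Fin (n+1)) A) (s : ℤ) :
    Set (↥P → MvPolynomial (Fin (n+1)) A) :=
  {v | ∃ k : ↥P, ∃ i : Fin (n+1), ¬ mult (k : Exp n) i ∧ ∃ δ : Exp n,
    (∀ j ∈ δ.support, j ≤ i) ∧ (degE δ : ℤ) + 1 + ddeg P k = s ∧
    v = (monomial δ (1:A)) • Ssyz P Pc k i}

end SyzDefs

end MB

namespace Module.Basis

open Submodule

variable {ι A V : Type*} [CommRing A] [AddCommGroup V] [Module A V] (b : Basis ι A V)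

theorem span_image_eq_sup_of_sub_mem {s u : Set ι} {f : ι → V}
    (hf : ∀ i ∈ s ∩ u, b i - f i ∈ span A (b '' (s \ u))) :
    span A (b '' s) = span A (f '' (s ∩ u)) ⊔ span A (b '' (s \ u)) := by
  have hN : span A (b '' (s \ u)) ≤ span A (b '' s) := span_mono (Set.image_mono Set.sdiff_subset)
  apply le_antisymm
  · refine span_le.2 ?_
    rintro _ ⟨i, hi, rfl⟩
    by_cases hiu : i ∈ u
    · rw [← add_sub_cancel (f i) (b i)]
      exact add_mem (mem_sup_left (subset_span ⟨i, ⟨hi, hiu⟩, rfl⟩))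
        (mem_sup_right (hf i ⟨hi, hiu⟩))
    · exact mem_sup_right (subset_span ⟨i, ⟨hi, hiu⟩, rfl⟩)
  · refine sup_le (span_le.2 ?_) hN
    rintro _ ⟨i, hi, rfl⟩
    rw [← sub_sub_cancel (b i) (f i)]
    exact sub_mem (subset_span ⟨i, hi.1, rfl⟩) (hN (hf i hi))

theorem disjoint_span_image_of_sub_mem {t w : Set ι} (htw : Disjoint t w) {f : ι → V}
    (hf : ∀ i ∈ t, b i - f i ∈ span A (b '' w)) :
    Disjoint (span A (f '' t)) (span A (b '' w)) := by
  classical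
  set ψ : V →ₗ[A] V := b.constr A (t.indicator f)
  have hker : span A (b '' w) ≤ LinearMap.ker ψ := by
    refine span_le.2 ?_
    rintro _ ⟨j, hj, rfl⟩
    simp [ψ, constr_basis, Set.indicator_of_notMem (htw.notMem_of_mem_right hj)]
  have hfix : span A (f '' t) ≤ LinearMap.eqLocus ψ LinearMap.id := by
    refine span_le.2 ?_
    rintro _ ⟨i, hi, rfl⟩
    have h0 : ψ (b i - f i) = 0 := hker (hf i hi)
    rw [map_sub, constr_basis, Set.indicator_of_mem hi, sub_eq_zero] at h0
    exact h0.symm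
  rw [disjoint_def]
  intro v hvF hvN
  exact (hfix hvF).symm.trans (hker hvN)

end Module.Basis

namespace MB

theorem setOf_eq_image_sigma {n : ℕ} {κ V : Type*} (f : (_ : κ) × Exp n → V)
    (P Q : κ → Exp n → Prop) :
    {v | ∃ k α, P k α ∧ Q k α ∧ v = f ⟨k, α⟩} = f '' ({i | Q i.1 i.2} ∩ {i | P i.1 i.2}) := by
  ext v
  simp only [Set.mem_ofPred_eq, Set.mem_image, Set.mem_inter_iff, Sigma.exists]
  grind

section Terms

open Submodule

variable {n : ℕ} {κ : Type*} [Fintype κ] {A : Type*} [CommRing A]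

noncomputable def termBasis :
    Module.Basis ((_ : κ) × Exp n) A (κ → MvPolynomial (Fin (n+1)) A) :=
  Pi.basis fun _ => basisMonomials (Fin (n+1)) A

theorem termBasis_apply [DecidableEq κ] (i : (_ : κ) × Exp n) :
    (termBasis i : κ → MvPolynomial (Fin (n+1)) A) = termV A i.2 i.1 := by
  simp [termBasis, termV, Pi.basis_apply, coe_basisMonomials]

theorem termBasis_repr_apply (v : κ → MvPolynomial (Fin (n+1)) A) (i : (_ : κ) × Exp n) :
    termBasis.repr v i = (v i.1).coeff i.2 :=
  rfl

theorem mem_span_termBasis_image {t : Set ((_ : κ) × Exp n)}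
    {v : κ → MvPolynomial (Fin (n+1)) A} :
    v ∈ span A (termBasis '' t) ↔ ∀ l, ∀ β ∈ (v l).support, ⟨l, β⟩ ∈ t := by
  rw [Module.Basis.mem_span_image]
  constructor
  · intro h l β hβ
    exact h (by simpa [termBasis_repr_apply] using hβ)
  · rintro h ⟨l, β⟩ hi
    exact h l β (by simpa [termBasis_repr_apply] using hi)

theorem homogCompV_eq_span [DecidableEq κ] (d : κ → ℤ) (s : ℤ) :
    (homogCompV A d s : Submodule A (κ → MvPolynomial (Fin (n+1)) A))
      = span A (termBasis '' {i | (degE i.2 : ℤ) + d i.1 = s}) := by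
  ext v
  rw [mem_span_termBasis_image]
  rfl

theorem NUTermsDeg_eq_image [DecidableEq κ] (d : κ → ℤ) (J : κ → Set (Exp n)) (s : ℤ) :
    NUTermsDeg A d J s
      = termBasis '' ({i | (degE i.2 : ℤ) + d i.1 = s} \ {i | i.2 ∈ J i.1}) := by
  ext v
  simp only [NUTermsDeg, Set.mem_ofPred_eq, Set.mem_image, Set.mem_sdiff, Sigma.exists,
    termBasis_apply]
  grind

end Terms

theorem statement0_general {n : ℕ} {κ : Type*} [Fintype κ] [DecidableEq κ]
    {A : Type*} [CommRing A]
    (d : κ → ℤ) (J : κ → Set (Exp n))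
    (M : Submodule (MvPolynomial (Fin (n+1)) A) (κ → MvPolynomial (Fin (n+1)) A))
    (hquot : ∀ s : ℤ, homogCompV A d s ≤
        M.restrictScalars A ⊔ Submodule.span A (NUTermsDeg A d J s)) :
    ∀ s : ℤ, ∃ F : Exp n → κ → (κ → MvPolynomial (Fin (n+1)) A),
      (∀ k, ∀ α ∈ J k, (degE α : ℤ) + d k = s →
        F α k ∈ M ∧ IsHomogV d (F α k) s ∧
        ∀ l, ∀ β ∈ ((F α k - termV A α k) l).support, β ∉ J l) ∧
      homogCompV A d s
        = Submodule.span A {v | ∃ k, ∃ α, α ∈ J k ∧ (degE α : ℤ) + d k = s ∧ v = F α k}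
          ⊔ Submodule.span A (NUTermsDeg A d J s) ∧
      Submodule.span A {v | ∃ k, ∃ α, α ∈ J k ∧ (degE α : ℤ) + d k = s ∧ v = F α k}
          ⊓ Submodule.span A (NUTermsDeg A d J s) = ⊥ := by
  intro s
  set S : Set ((_ : κ) × Exp n) := {i | (degE i.2 : ℤ) + d i.1 = s}
  set U : Set ((_ : κ) × Exp n) := {i | i.2 ∈ J i.1}
  have hmark : ∀ i ∈ S, ∃ m ∈ M, termBasis i - m ∈ Submodule.span A (termBasis '' (S \ U)) := by
    intro i hi
    have hi' : termBasis i ∈ homogCompV A d s := by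
      rw [homogCompV_eq_span]; exact Submodule.subset_span ⟨i, hi, rfl⟩
    obtain ⟨m, hm, ν, hν, hmν⟩ := Submodule.mem_sup.1 (hquot s hi')
    rw [NUTermsDeg_eq_image] at hν
    exact ⟨m, hm, by rwa [← hmν, add_sub_cancel_left]⟩
  choose! f hfM hfN using hmark
  have hsum := termBasis.span_image_eq_sup_of_sub_mem fun i hi => hfN i hi.1
  have hdisj := termBasis.disjoint_span_image_of_sub_mem Set.disjoint_sdiff_inter.symm
    fun i hi => hfN i hi.1
  refine ⟨fun α k => f ⟨k, α⟩, fun k α hα hdeg => ⟨hfM _ hdeg, ?_, ?_⟩, ?_, ?_⟩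
  · show f ⟨k, α⟩ ∈ homogCompV A d s
    rw [homogCompV_eq_span, hsum]
    exact Submodule.mem_sup_left (Submodule.subset_span ⟨⟨k, α⟩, ⟨hdeg, hα⟩, rfl⟩)
  · have htail := neg_mem (hfN ⟨k, α⟩ hdeg)
    rw [neg_sub, termBasis_apply, mem_span_termBasis_image] at htail
    exact fun l β hβ => (htail l β hβ).2
  · beta_reduce
    rw [setOf_eq_image_sigma, homogCompV_eq_span, NUTermsDeg_eq_image]
    exact hsum
  · beta_reduce
    rw [setOf_eq_image_sigma, NUTermsDeg_eq_image]
    exact disjoint_iff.1 hdisj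

/-- Lemma `markedOnMon`: if `N(U)_s` generates `(S^m_d)_s / M_s` for every `s`,
then for every `s` there is a marked set `F ⊆ M_s` over the degree-`s` terms of `U`
with `(S^m_d)_s = ⟨F⟩^A ⊕ ⟨N(U)_s⟩^A`. -/
theorem statement0 {n : ℕ} {κ : Type*} [Fintype κ] [DecidableEq κ] (hm : Nonempty κ)
    {A : Type*} [CommRing A] [IsNoetherianRing A]
    (d : κ → ℤ) (J : κ → Set (Exp n))
    (hJ : ∀ k, IsMonomialIdeal (J k))
    (hfin : ∀ k, ∃ B : Finset (Exp n), ∀ α, α ∈ J k ↔ ∃ β ∈ B, ∃ δ, α = β + δ)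
    (M : Submodule (MvPolynomial (Fin (n+1)) A) (κ → MvPolynomial (Fin (n+1)) A))
    (hgr : M = Submodule.span (MvPolynomial (Fin (n+1)) A)
        {f | f ∈ M ∧ ∃ s : ℤ, IsHomogV d f s})
    (hquot : ∀ s : ℤ, homogCompV A d s ≤
        M.restrictScalars A ⊔ Submodule.span A (NUTermsDeg A d J s)) :
    ∀ s : ℤ, ∃ F : Exp n → κ → (κ → MvPolynomial (Fin (n+1)) A),
      (∀ k, ∀ α ∈ J k, (degE α : ℤ) + d k = s →
        F α k ∈ M ∧ IsHomogV d (F α k) s ∧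
        ∀ l, ∀ β ∈ ((F α k - termV A α k) l).support, β ∉ J l) ∧
      homogCompV A d s
        = Submodule.span A {v | ∃ k, ∃ α, α ∈ J k ∧ (degE α : ℤ) + d k = s ∧ v = F α k}
          ⊔ Submodule.span A (NUTermsDeg A d J s) ∧
      Submodule.span A {v | ∃ k, ∃ α, α ∈ J k ∧ (degE α : ℤ) + d k = s ∧ v = F α k}
          ⊓ Submodule.span A (NUTermsDeg A d J s) = ⊥ :=
  statement0_general d J M hquot

end MB
end

section
/- Let U ⊆ S^m_d be a quasi-stable monomial module and G a P(U)-marked set. For every f_α^k ∈ G and every term x^δ, each term in the support of x^δ x^α e_k − x^δ f_α^k either belongs to N(U) or has the form x^η x^ν e_l with x^ν e_l ∈ P(U), every variable of x^η multiplicative for x^ν, and x^η strictly smaller than x^δ in the lexicographic order. -/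
open MvPolynomial

namespace MB

variable {n : ℕ}

open scoped Pointwise

lemma lex_trichotomy {n : ℕ} (η δ : Exp n) : η = δ ∨ lexLt η δ ∨ lexLt δ η := by
  by_cases h : η = δ
  · exact Or.inl h
  · right
    have hne : ((Finset.univ : Finset (Fin (n+1))).filter fun i => η i ≠ δ i).Nonempty := by
      by_contra hc
      apply h
      ext i
      by_contra hi
      exact hc ⟨i, Finset.mem_filter.mpr ⟨Finset.mem_univ i, hi⟩⟩
    set s := (Finset.univ : Finset (Fin (n+1))).filter fun i => η i ≠ δ i
    have hiM := s.max'_mem hne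
    set m := s.max' hne
    have hm : η m ≠ δ m := (Finset.mem_filter.mp hiM).2
    have hgt : ∀ j, m < j → η j = δ j := by
      intro j hj
      by_contra hjne
      exact absurd (s.le_max' j (Finset.mem_filter.mpr ⟨Finset.mem_univ j, hjne⟩))
        (not_le.mpr hj)
    rcases lt_or_gt_of_ne hm with h1 | h1
    · exact Or.inl ⟨m, h1, hgt⟩
    · exact Or.inr ⟨m, h1, fun j hj => (hgt j hj).symm⟩

/-- Lemma `modulelexorder`. -/
theorem statement1 {n : ℕ} {κ : Type*} [Fintype κ] [DecidableEq κ] (hm : Nonempty κ)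
    {A : Type*} [CommRing A] [IsNoetherianRing A]
    (d : κ → ℤ) (J : κ → Set (Exp n)) (P : κ → Finset (Exp n))
    (hQS : ∀ k, IsMonomialIdeal (J k) ∧ IsPommaretBasis (P k) (J k))
    (gb : Exp n → κ → (κ → MvPolynomial (Fin (n+1)) A))
    (hG : IsMarkedSetV d J P gb) :
    ∀ k, ∀ α ∈ P k, ∀ δ : Exp n, ∀ l,
      ∀ β ∈ (((monomial δ (1:A)) • (termV A α k - gb α k)) l).support,
        β ∉ J l ∨ ∃ ν ∈ P l, ∃ η : Exp n, multExp ν η ∧ β = ν + η ∧ lexLt η δ := by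
  classical
  intro k α hα δ l β hβ
  -- extract γ with β = δ + γ and γ in the support of (gb α k - termV A α k) l
  have hβ' : β ∈ ((monomial δ (1:A)) * ((termV A α k - gb α k) l)).support := by
    simpa [Pi.smul_apply, smul_eq_mul] using hβ
  have hsub : ((monomial δ (1:A)) * ((termV A α k - gb α k) l)).support ⊆
      (monomial δ (1:A)).support + ((termV A α k - gb α k) l).support :=
    MvPolynomial.support_mul _ _
  obtain ⟨δ', hδ', γ, hγ, hsum⟩ := Finset.mem_add.mp (hsub hβ')
  have hδ'' : δ' = δ := by
    have := MvPolynomial.support_monomial_subset hδ'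
    simpa using this
  rw [hδ''] at hsum
  clear hδ' hδ''
  have hγ' : γ ∈ ((gb α k - termV A α k) l).support := by
    have : (termV A α k - gb α k) l = -((gb α k - termV A α k) l) := by
      simp [Pi.sub_apply]
    rw [this, MvPolynomial.support_neg] at hγ
    exact hγ
  have hγN : γ ∉ J l := (hG k α hα l γ hγ').1
  by_cases hβJ : β ∈ J l
  · right
    obtain ⟨ν, hν, η, hmul, hcone⟩ := ((hQS l).2.1 β).mp hβJ
    refine ⟨ν, hν, η, hmul, hcone, ?_⟩
    -- show lexLt η δ by ruling out the other two cases
    have hβeq : δ + γ = ν + η := by rw [hsum]; exact hcone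
    rcases lex_trichotomy η δ with heq | hlt | hlt
    · -- η = δ forces γ = ν ∈ J l, contradiction
      exfalso
      subst heq
      have : γ = ν := by
        have := hβeq
        rw [add_comm ν η] at this
        exact add_left_cancel this
      apply hγN
      rw [this]
      exact ((hQS l).2.1 ν).mpr ⟨ν, hν, 0, by intro i hi; simp at hi, by simp⟩
    · exact hlt
    · -- lexLt δ η leads to γ ∈ J l, contradiction
      exfalso
      obtain ⟨i, hi, hgt⟩ := hlt
      have hpt : ∀ j, δ j + γ j = ν j + η j := by
        intro j
        have := congrArg (fun f : Exp n => f j) hβeq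
        simpa using this
      have hiη : i ∈ η.support := Finsupp.mem_support_iff.mpr (by omega)
      have hmin : ∀ j ∈ ν.support, i ≤ j := hmul i hiη
      have hle : ν ≤ γ := by
        intro j
        rcases lt_trichotomy j i with hj | hj | hj
        · have : ν j = 0 := by
            by_contra hc
            exact absurd (hmin j (Finsupp.mem_support_iff.mpr hc)) (not_le.mpr hj)
          omega
        · subst hj
          have := hpt j
          have := hi
          omega
        · have := hpt j
          have := hgt j hj
          omega
      apply hγN
      have : ν + (γ - ν) = γ := by
        ext j
        have := hle j
        simp [Finsupp.tsub_apply]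
        omega
      rw [← this]
      exact (hQS l).1 ν (((hQS l).2.1 ν).mpr
        ⟨ν, hν, 0, by intro i hi; simp at hi, by simp⟩) (γ - ν)
  · exact Or.inl hβJ

end MB
end

section
/- Let U ⊆ S^m_d be a quasi-stable monomial module and G a P(U)-marked set. Then the reduction relation →_G is Noetherian (there is no infinite chain of reduction steps) and confluent; in particular every homogeneous element reduces to a unique element of ⟨N(U)⟩^A. -/
open MvPolynomial

namespace MB

variable {n : ℕ}

/-!
Every term of `U` has a unique Pommaret decomposition `x^δ x^α e_k` with `x^α e_k ∈ P(U)` and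
`x^δ` multiplicative for `x^α`. A term of `U` occurring in `x^η f_α^k` is either its head term
`x^η x^α e_k`, or it is `x^η x^β e_l` with `x^β e_l ∈ N(U)`, and then the multiplicative part of
its decomposition is lexicographically smaller than `x^η`. So a reduction step removes a term of
`U` and only creates terms of `U` with smaller multiplicative parts: the multiset of these parts
decreases in the Dershowitz–Manna order, and `→_G` is Noetherian. For the same reason, in a
nonzero `A`-combination of distinct multiples `x^η f_α^k` the head term of a summand with
lexicographically largest `x^η` cannot cancel, so `⟨x^η f_α^k⟩^A ∩ ⟨N(U)⟩^A = 0`. Two normal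
forms of the same element differ by an element of this intersection, hence they coincide, and
confluence follows.
-/

lemma _root_.Finset.isDershowitzMannaLT_map_val {ι α : Type*} [DecidableEq ι] [Preorder α]
    (f : ι → α) {s s' : Finset ι} {t : ι} (hts : t ∈ s) (hts' : t ∉ s')
    (hlt : ∀ p ∈ s', p ∉ s → f p < f t) :
    (s'.val.map f).IsDershowitzMannaLT (s.val.map f) := by
  have hsplit (u v : Finset ι) : u.val.map f = (u ∩ v).val.map f + (u \ v).val.map f := by
    rw [← Multiset.map_add, ← Finset.filter_mem_eq_inter, Finset.sdiff_eq_filter,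
      Finset.filter_val, Finset.filter_val, Multiset.filter_add_not]
  have ht : f t ∈ (s \ s').val.map f := Multiset.mem_map_of_mem f (Finset.mem_sdiff.2 ⟨hts, hts'⟩)
  refine ⟨(s' ∩ s).val.map f, (s' \ s).val.map f, (s \ s').val.map f, ?_, hsplit s' s, ?_, ?_⟩
  · intro hzero
    rw [hzero] at ht
    simp at ht
  · rw [Finset.inter_comm]; exact hsplit s s'
  · intro y hy
    obtain ⟨p, hp, rfl⟩ := Multiset.mem_map.1 hy
    obtain ⟨hps', hps⟩ := Finset.mem_sdiff.1 hp
    exact ⟨f t, ht, hlt p hps' hps⟩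

section Pommaret

variable {n : ℕ}

lemma toColex_lt_toColex_iff_lexLt {η δ : Exp n} : toColex ⇑η < toColex ⇑δ ↔ lexLt η δ :=
  exists_congr fun _ => and_comm

lemma multExp_zero (α : Exp n) : multExp α 0 := by
  simp [multExp]

variable {P : Finset (Exp n)} {T : Set (Exp n)}

lemma IsPommaretBasis.add_mem (hB : IsPommaretBasis P T) {α δ : Exp n} (hα : α ∈ P)
    (hδ : multExp α δ) : α + δ ∈ T :=
  (hB.1 _).2 ⟨α, hα, δ, hδ, rfl⟩

lemma IsPommaretBasis.mem (hB : IsPommaretBasis P T) {α : Exp n} (hα : α ∈ P) : α ∈ T := by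
  simpa using hB.add_mem hα (multExp_zero α)

lemma IsPommaretBasis.eq_of_add_eq_add (hB : IsPommaretBasis P T) {α δ α' δ' : Exp n}
    (hα : α ∈ P) (hδ : multExp α δ) (hα' : α' ∈ P) (hδ' : multExp α' δ')
    (h : α + δ = α' + δ') : α = α' ∧ δ = δ' := by
  obtain rfl : α = α' := hB.2 _ α hα α' hα' ⟨δ, hδ, rfl⟩ ⟨δ', hδ', h⟩
  exact ⟨rfl, add_left_cancel h⟩

open Classical in
/-- The multiplicative part `x^δ` of the Pommaret decomposition `x^γ = x^α x^δ` (junk value `0`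
when `x^γ` lies in no cone). -/
noncomputable def multPart (P : Finset (Exp n)) (γ : Exp n) : Exp n :=
  if h : ∃ α ∈ P, γ ∈ pommaretCone α then Classical.choose h.choose_spec.2 else 0

lemma IsPommaretBasis.exists_multPart (hB : IsPommaretBasis P T) {γ : Exp n} (hγ : γ ∈ T) :
    ∃ α ∈ P, multExp α (multPart P γ) ∧ γ = α + multPart P γ := by
  have h : ∃ α ∈ P, γ ∈ pommaretCone α := (hB.1 γ).1 hγ
  rw [multPart, dif_pos h]
  exact ⟨h.choose, h.choose_spec.1, Classical.choose_spec h.choose_spec.2⟩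

lemma IsPommaretBasis.multPart_add (hB : IsPommaretBasis P T) {α δ : Exp n} (hα : α ∈ P)
    (hδ : multExp α δ) : multPart P (α + δ) = δ := by
  obtain ⟨α', hα', hδ', h⟩ := hB.exists_multPart (hB.add_mem hα hδ)
  exact (hB.eq_of_add_eq_add hα' hδ' hα hδ h.symm).2

lemma IsMonomialIdeal.lexLt_of_add_eq_add (hI : IsMonomialIdeal T) {α β δ η : Exp n}
    (hα : α ∈ T) (hβ : β ∉ T) (hδ : multExp α δ) (h : η + β = α + δ) : lexLt δ η := by
  rw [← toColex_lt_toColex_iff_lexLt]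
  by_contra hle
  rcases (not_lt.1 hle).lt_or_eq with hlt | heq
  · obtain ⟨i, hlt, hfix⟩ := toColex_lt_toColex_iff_lexLt.1 hlt
    have hcoord (j : Fin (n+1)) : η j + β j = α j + δ j := by
      simpa using DFunLike.congr_fun h j
    -- `x_i` divides `x^δ`, hence is multiplicative for `x^α`: `x^α` involves no `x_j` with `j < i`
    have hαlow : ∀ j < i, α j = 0 := fun j hj => by
      by_contra hαj
      exact absurd (hδ i (Finsupp.mem_support_iff.2 (by omega)) j
        (Finsupp.mem_support_iff.2 hαj)) (not_le.2 hj)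
    have hαβ : α ≤ β := fun j => by
      rcases lt_trichotomy j i with hj | rfl | hj
      · simp [hαlow j hj]
      · have := hcoord j; omega
      · have := hcoord j; have := hfix j hj; omega
    exact hβ (add_tsub_cancel_of_le hαβ ▸ hI α hα (β - α))
  · obtain rfl : η = δ := DFunLike.coe_injective (toColex.injective heq)
    exact hβ (add_left_cancel (h.trans (add_comm α η)) ▸ hα)

end Pommaret

section MarkedSets

variable {n : ℕ} {κ : Type*} {A : Type*} [CommRing A]
  {d : κ → ℤ} {J : κ → Set (Exp n)} {P : κ → Finset (Exp n)}
  {gb : Exp n → κ → (κ → MvPolynomial (Fin (n+1)) A)}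

def IsQuasiStable (J : κ → Set (Exp n)) (P : κ → Finset (Exp n)) : Prop :=
  ∀ k, IsMonomialIdeal (J k) ∧ IsPommaretBasis (P k) (J k)

/-- The multiplicative multiple `x^η f_α^k` indexed by `t = (η, α, k)`. -/
noncomputable def markedMultiple (gb : Exp n → κ → (κ → MvPolynomial (Fin (n+1)) A))
    (t : Exp n × Exp n × κ) : κ → MvPolynomial (Fin (n+1)) A :=
  monomial t.1 (1 : A) • gb t.2.1 t.2.2

def multIndices (P : κ → Finset (Exp n)) : Set (Exp n × Exp n × κ) :=
  {t | t.2.1 ∈ P t.2.2 ∧ multExp t.2.1 t.1}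

lemma coeff_markedMultiple (t : Exp n × Exp n × κ) (l : κ) (γ : Exp n) :
    coeff γ (markedMultiple gb t l) =
      if t.1 ≤ γ then coeff (γ - t.1) (gb t.2.1 t.2.2 l) else 0 := by
  simp [markedMultiple, coeff_monomial_mul']

lemma sub_mem_span_of_reflTransGen {f u : κ → MvPolynomial (Fin (n+1)) A}
    (h : Relation.ReflTransGen (RedStep P gb) f u) :
    f - u ∈ Submodule.span A (markedMultiple gb '' multIndices P) := by
  induction h with
  | refl => simp
  | tail _ hstep ih =>
    obtain ⟨k, α, hα, η, hη, -, rfl⟩ := hstep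
    rw [sub_sub_eq_add_sub, add_sub_right_comm]
    exact add_mem ih (Submodule.smul_mem _ _
      (Submodule.subset_span ⟨(η, α, k), ⟨hα, hη⟩, rfl⟩))

lemma exists_redStep (hQS : IsQuasiStable J P) {f : κ → MvPolynomial (Fin (n+1)) A} {l : κ}
    {γ : Exp n} (hγ : γ ∈ J l) (h : coeff γ (f l) ≠ 0) : ∃ f', RedStep P gb f f' := by
  obtain ⟨α, hα, hδ, hγα⟩ := (hQS l).2.exists_multPart hγ
  exact ⟨_, l, α, hα, _, hδ, by rwa [add_comm (multPart _ _), ← hγα], rfl⟩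

variable [DecidableEq κ]

lemma termV_apply (α : Exp n) (k l : κ) :
    termV A α k l = if l = k then monomial α (1 : A) else 0 := by
  by_cases h : l = k
  · subst h; simp [termV]
  · simp [termV, h]

lemma IsMarkedSetV.coeff_ne_zero (hG : IsMarkedSetV d J P gb) {k l : κ} {α β : Exp n}
    (hα : α ∈ P k) (h : coeff β (gb α k l) ≠ 0) : (l = k ∧ β = α) ∨ β ∉ J l := by
  by_cases htail : coeff β ((gb α k - termV A α k) l) = 0
  · left
    rw [Pi.sub_apply, coeff_sub, sub_eq_zero, termV_apply] at htail
    rw [htail] at h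
    split_ifs at h with hl
    · rw [coeff_monomial] at h
      exact ⟨hl, (ite_ne_right_iff.1 h).1.symm⟩
    · simp at h
  · exact Or.inr (hG k α hα l β (mem_support_iff.2 htail)).1

lemma IsMarkedSetV.coeff_self (hG : IsMarkedSetV d J P gb) {k : κ} {α : Exp n} (hα : α ∈ P k)
    (hαJ : α ∈ J k) : coeff α (gb α k k) = 1 := by
  have htail : coeff α ((gb α k - termV A α k) k) = 0 :=
    notMem_support_iff.1 fun h => (hG k α hα k α h).1 hαJ
  rw [Pi.sub_apply, coeff_sub, sub_eq_zero, termV_apply, if_pos rfl] at htail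
  simp [htail]

lemma coeff_markedMultiple_self (hQS : IsQuasiStable J P) (hG : IsMarkedSetV d J P gb)
    {t : Exp n × Exp n × κ} (ht : t ∈ multIndices P) :
    coeff (t.1 + t.2.1) (markedMultiple gb t t.2.2) = 1 := by
  rw [coeff_markedMultiple, if_pos le_self_add, add_tsub_cancel_left]
  exact hG.coeff_self ht.1 ((hQS _).2.mem ht.1)

lemma coeff_markedMultiple_ne_zero (hQS : IsQuasiStable J P) (hG : IsMarkedSetV d J P gb)
    {t : Exp n × Exp n × κ} (ht : t ∈ multIndices P) {l : κ} {α δ : Exp n} (hα : α ∈ P l)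
    (hδ : multExp α δ) (h : coeff (α + δ) (markedMultiple gb t l) ≠ 0) :
    (δ, α, l) = t ∨ lexLt δ t.1 := by
  obtain ⟨η, α₀, k⟩ := t
  rw [coeff_markedMultiple] at h
  split_ifs at h with hle
  · have hsplit : η + (α + δ - η) = α + δ := add_tsub_cancel_of_le hle
    rcases hG.coeff_ne_zero ht.1 h with ⟨rfl, hhead⟩ | htail
    · rw [hhead, add_comm] at hsplit
      obtain ⟨rfl, rfl⟩ := (hQS l).2.eq_of_add_eq_add hα hδ ht.1 ht.2 hsplit.symm
      exact Or.inl rfl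
    · exact Or.inr ((hQS l).1.lexLt_of_add_eq_add ((hQS l).2.mem hα) htail hδ hsplit)
  · exact absurd rfl h

variable [Fintype κ]

lemma mem_span_NUTerms_iff {w : κ → MvPolynomial (Fin (n+1)) A} :
    w ∈ Submodule.span A (NUTerms A J) ↔ ∀ l, ∀ γ ∈ J l, coeff γ (w l) = 0 := by
  constructor
  · intro hw
    induction hw using Submodule.span_induction with
    | mem x hx =>
      obtain ⟨k, α, hα, rfl⟩ := hx
      intro l γ hγ
      rw [termV_apply]
      split_ifs with hl
      · subst hl
        rw [coeff_monomial, if_neg]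
        rintro rfl
        exact hα hγ
      · simp
    | zero => simp
    | add x y _ _ hx hy => intro l γ hγ; simp [hx l γ hγ, hy l γ hγ]
    | smul a x _ hx => intro l γ hγ; simp [hx l γ hγ]
  · intro hw
    rw [← Finset.univ_sum_single w]
    refine Submodule.sum_mem _ fun l _ => ?_
    have hsingle : Pi.single l (w l) = ∑ γ ∈ (w l).support, coeff γ (w l) • termV A γ l := by
      conv_lhs => rw [(w l).as_sum]
      rw [← AddMonoidHom.single_apply, map_sum]
      simp [termV, ← Pi.single_smul', smul_monomial]
    rw [hsingle]
    exact Submodule.sum_mem _ fun γ hγ => Submodule.smul_mem _ _ (Submodule.subset_span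
      ⟨l, γ, fun hγJ => mem_support_iff.1 hγ (hw l γ hγJ), rfl⟩)

open Classical in
noncomputable def supportInU (J : κ → Set (Exp n)) (f : κ → MvPolynomial (Fin (n+1)) A) :
    Finset (κ × Exp n) :=
  (Finset.univ.biUnion fun l => (f l).support.image (l, ·)).filter fun p => p.2 ∈ J p.1

lemma mem_supportInU {f : κ → MvPolynomial (Fin (n+1)) A} {p : κ × Exp n} :
    p ∈ supportInU J f ↔ p.2 ∈ J p.1 ∧ coeff p.2 (f p.1) ≠ 0 := by
  obtain ⟨l, γ⟩ := p
  simp [supportInU, and_comm]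

noncomputable def redMeasure (J : κ → Set (Exp n)) (P : κ → Finset (Exp n))
    (f : κ → MvPolynomial (Fin (n+1)) A) : Multiset (Colex (Fin (n+1) → ℕ)) :=
  (supportInU J f).val.map fun p => toColex ⇑(multPart (P p.1) p.2)

lemma redMeasure_lt_of_redStep (hQS : IsQuasiStable J P)
    (hG : IsMarkedSetV d J P gb) {f f' : κ → MvPolynomial (Fin (n+1)) A}
    (h : RedStep P gb f f') : (redMeasure J P f').IsDershowitzMannaLT (redMeasure J P f) := by
  obtain ⟨k, α, hα, η, hη, hne, rfl⟩ := h
  have ht : ((η, α, k) : Exp n × Exp n × κ) ∈ multIndices P := ⟨hα, hη⟩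
  have hcoeff (l : κ) (γ : Exp n) :
      coeff γ ((f - coeff (η + α) (f k) • (monomial η (1 : A) • gb α k)) l)
        = coeff γ (f l) - coeff (η + α) (f k) * coeff γ (markedMultiple gb (η, α, k) l) := by
    simp only [Pi.sub_apply, Pi.smul_apply, coeff_sub, coeff_smul, smul_eq_mul]
    rfl
  have hηα : η + α ∈ J k := add_comm α η ▸ (hQS k).2.add_mem hα hη
  refine Finset.isDershowitzMannaLT_map_val _ (t := (k, η + α)) (mem_supportInU.2 ⟨hηα, hne⟩)
    (fun hmem => (mem_supportInU.1 hmem).2 ?_) fun p hp' hp => ?_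
  · rw [hcoeff, coeff_markedMultiple_self hQS hG ht, mul_one, sub_self]
  obtain ⟨hpJ, hp'ne⟩ := mem_supportInU.1 hp'
  have hp0 : coeff p.2 (f p.1) = 0 := by
    by_contra hne'
    exact hp (mem_supportInU.2 ⟨hpJ, hne'⟩)
  obtain ⟨α', hα', hδ', hpα'⟩ := (hQS p.1).2.exists_multPart hpJ
  rw [hcoeff, hp0, zero_sub, neg_ne_zero, hpα'] at hp'ne
  rcases coeff_markedMultiple_ne_zero hQS hG ht hα' hδ' (right_ne_zero_of_mul hp'ne) with
    heq | hlt
  · simp only [Prod.mk.injEq] at heq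
    obtain ⟨hδη, hα'α, hpk⟩ := heq
    refine absurd ?_ hp
    rw [show p = (k, η + α) from Prod.ext hpk (by rw [hpα', hδη, hα'α, add_comm α η])]
    exact mem_supportInU.2 ⟨hηα, hne⟩
  · show _ < toColex ⇑(multPart (P k) (η + α))
    rw [add_comm η α, (hQS k).2.multPart_add hα hη]
    exact toColex_lt_toColex_iff_lexLt.2 hlt

lemma wellFounded_flip_redStep (hQS : IsQuasiStable J P) (hG : IsMarkedSetV d J P gb) :
    WellFounded (flip (RedStep P gb)) :=
  Subrelation.wf (fun h => redMeasure_lt_of_redStep hQS hG h)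
    (InvImage.wf (redMeasure J P) Multiset.wellFounded_isDershowitzMannaLT)

lemma exists_reflTransGen_mem_span_NUTerms (hQS : IsQuasiStable J P)
    (hG : IsMarkedSetV d J P gb) (f : κ → MvPolynomial (Fin (n+1)) A) :
    ∃ w, Relation.ReflTransGen (RedStep P gb) f w ∧ w ∈ Submodule.span A (NUTerms A J) := by
  induction f using (wellFounded_flip_redStep hQS hG).induction with
  | _ f ih =>
  by_cases hf : f ∈ Submodule.span A (NUTerms A J)
  · exact ⟨f, .refl, hf⟩
  obtain ⟨l, γ, hγ, hc⟩ : ∃ l, ∃ γ ∈ J l, coeff γ (f l) ≠ 0 := by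
    simpa [mem_span_NUTerms_iff] using hf
  obtain ⟨f', hf'⟩ := exists_redStep (gb := gb) hQS hγ hc
  obtain ⟨w, hw, hwN⟩ := ih f' hf'
  exact ⟨w, .head hf' hw, hwN⟩

lemma disjoint_span_markedMultiple_span_NUTerms (hQS : IsQuasiStable J P)
    (hG : IsMarkedSetV d J P gb) :
    Disjoint (Submodule.span A (markedMultiple gb '' multIndices P))
      (Submodule.span A (NUTerms A J)) := by
  rw [Submodule.disjoint_def]
  intro x hx hxN
  obtain ⟨c, hc, rfl⟩ := (Finsupp.mem_span_image_iff_linearCombination A).1 hx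
  by_contra hne
  have hsupp : c.support.Nonempty :=
    Finsupp.support_nonempty_iff.2 (by rintro rfl; simp at hne)
  obtain ⟨t₀, ht₀, hmax⟩ := c.support.exists_max_image (fun t => toColex ⇑t.1) hsupp
  have ht₀I : t₀ ∈ multIndices P := hc ht₀
  have hcoeff : coeff (t₀.1 + t₀.2.1) (Finsupp.linearCombination A (markedMultiple gb) c t₀.2.2)
      = c t₀ := by
    rw [Finsupp.linearCombination_apply, Finsupp.sum, Finset.sum_apply, coeff_sum,
      Finset.sum_eq_single t₀ ?_ (fun h => (h ht₀).elim)]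
    · simp [coeff_markedMultiple_self hQS hG ht₀I]
    intro t ht htne
    rw [Pi.smul_apply, coeff_smul]
    convert smul_zero (c t)
    by_contra h
    rw [add_comm t₀.1] at h
    rcases coeff_markedMultiple_ne_zero hQS hG (hc ht) ht₀I.1 ht₀I.2 h with heq | hlt
    · exact htne heq.symm
    · exact not_lt.2 (hmax t ht) (toColex_lt_toColex_iff_lexLt.2 hlt)
  have hJ : t₀.1 + t₀.2.1 ∈ J t₀.2.2 := add_comm t₀.2.1 t₀.1 ▸ (hQS _).2.add_mem ht₀I.1 ht₀I.2
  exact Finsupp.mem_support_iff.1 ht₀ (hcoeff ▸ mem_span_NUTerms_iff.1 hxN _ _ hJ)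

lemma eq_of_reflTransGen_of_mem_span_NUTerms (hQS : IsQuasiStable J P)
    (hG : IsMarkedSetV d J P gb) {f u v : κ → MvPolynomial (Fin (n+1)) A}
    (hu : Relation.ReflTransGen (RedStep P gb) f u) (hv : Relation.ReflTransGen (RedStep P gb) f v)
    (huN : u ∈ Submodule.span A (NUTerms A J)) (hvN : v ∈ Submodule.span A (NUTerms A J)) :
    u = v := by
  have hmem : u - v ∈ Submodule.span A (markedMultiple gb '' multIndices P) := by
    rw [← sub_sub_sub_cancel_left v u f]
    exact sub_mem (sub_mem_span_of_reflTransGen hv) (sub_mem_span_of_reflTransGen hu)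
  exact sub_eq_zero.1 (Submodule.disjoint_def.1
    (disjoint_span_markedMultiple_span_NUTerms hQS hG) _ hmem (sub_mem huN hvN))

end MarkedSets

theorem statement2_general {n : ℕ} {κ : Type*} [Fintype κ] [DecidableEq κ]
    {A : Type*} [CommRing A]
    (d : κ → ℤ) (J : κ → Set (Exp n)) (P : κ → Finset (Exp n))
    (hQS : ∀ k, IsMonomialIdeal (J k) ∧ IsPommaretBasis (P k) (J k))
    (gb : Exp n → κ → (κ → MvPolynomial (Fin (n+1)) A))
    (hG : IsMarkedSetV d J P gb) :
    (∀ (f : κ → MvPolynomial (Fin (n+1)) A) (s : ℤ), IsHomogV d f s →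
      ¬ ∃ c : ℕ → (κ → MvPolynomial (Fin (n+1)) A),
        c 0 = f ∧ ∀ i, RedStep P gb (c i) (c (i+1))) ∧
    (∀ (f : κ → MvPolynomial (Fin (n+1)) A) (s : ℤ), IsHomogV d f s →
      ∀ u v, Relation.ReflTransGen (RedStep P gb) f u →
        Relation.ReflTransGen (RedStep P gb) f v →
        ∃ w, Relation.ReflTransGen (RedStep P gb) u w ∧
          Relation.ReflTransGen (RedStep P gb) v w) ∧
    (∀ (f : κ → MvPolynomial (Fin (n+1)) A) (s : ℤ), IsHomogV d f s →
      ∃! w, Relation.ReflTransGen (RedStep P gb) f w ∧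
        w ∈ Submodule.span A (NUTerms A J)) := by
  have hNF := exists_reflTransGen_mem_span_NUTerms hQS hG
  refine ⟨fun f _ _ ⟨c, _, hc⟩ => ?_, fun f _ _ u v hu hv => ?_, fun f _ _ => ?_⟩
  · exact (wellFounded_iff_isEmpty_descending_chain.1 (wellFounded_flip_redStep hQS hG)).elim
      ⟨c, hc⟩
  · obtain ⟨u', hu', hu'N⟩ := hNF u
    obtain ⟨v', hv', hv'N⟩ := hNF v
    obtain rfl := eq_of_reflTransGen_of_mem_span_NUTerms hQS hG (hu.trans hu') (hv.trans hv')
      hu'N hv'N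
    exact ⟨u', hu', hv'⟩
  · obtain ⟨w, hw, hwN⟩ := hNF f
    exact ⟨w, ⟨hw, hwN⟩, fun w' ⟨hw', hw'N⟩ =>
      eq_of_reflTransGen_of_mem_span_NUTerms hQS hG hw' hw hw'N hwN⟩

/-- Proposition `ConfNoeth`: the reduction relation `→_G` is Noetherian and
confluent; in particular every homogeneous element reduces to a unique element of `⟨N(U)⟩^A`. -/
theorem statement2 {n : ℕ} {κ : Type*} [Fintype κ] [DecidableEq κ] (hm : Nonempty κ)
    {A : Type*} [CommRing A] [IsNoetherianRing A]
    (d : κ → ℤ) (J : κ → Set (Exp n)) (P : κ → Finset (Exp n))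
    (hQS : ∀ k, IsMonomialIdeal (J k) ∧ IsPommaretBasis (P k) (J k))
    (gb : Exp n → κ → (κ → MvPolynomial (Fin (n+1)) A))
    (hG : IsMarkedSetV d J P gb) :
    (∀ (f : κ → MvPolynomial (Fin (n+1)) A) (s : ℤ), IsHomogV d f s →
      ¬ ∃ c : ℕ → (κ → MvPolynomial (Fin (n+1)) A),
        c 0 = f ∧ ∀ i, RedStep P gb (c i) (c (i+1))) ∧
    (∀ (f : κ → MvPolynomial (Fin (n+1)) A) (s : ℤ), IsHomogV d f s →
      ∀ u v, Relation.ReflTransGen (RedStep P gb) f u →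
        Relation.ReflTransGen (RedStep P gb) f v →
        ∃ w, Relation.ReflTransGen (RedStep P gb) u w ∧
          Relation.ReflTransGen (RedStep P gb) v w) ∧
    (∀ (f : κ → MvPolynomial (Fin (n+1)) A) (s : ℤ), IsHomogV d f s →
      ∃! w, Relation.ReflTransGen (RedStep P gb) f w ∧
        w ∈ Submodule.span A (NUTerms A J)) :=
  statement2_general d J P hQS gb hG

end MB
end

section
/- Let U ⊆ S^m_d be a quasi-stable monomial module and G a P(U)-marked set. If g = Σ_{i=1}^r λ_i x^{δ_i} f_{α_i}^{k_i} is a homogeneous element of degree s with all λ_i ∈ A nonzero and the x^{δ_i} f_{α_i}^{k_i} ∈ G^{(s)} pairwise distinct, then g ≠ 0 and g ∉ ⟨N(U)⟩^A. -/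
open MvPolynomial

namespace MB

variable {n : ℕ}

section Aux

variable {n : ℕ}

lemma lexLt_irrefl' (η : Exp n) : ¬ lexLt η η := by
  rintro ⟨i, hi, -⟩; exact lt_irrefl _ hi

lemma lexLt_trans' {a b c : Exp n} (h1 : lexLt a b) (h2 : lexLt b c) : lexLt a c := by
  obtain ⟨i, hi, hgi⟩ := h1
  obtain ⟨j, hj, hgj⟩ := h2
  rcases lt_trichotomy i j with h | h | h
  · exact ⟨j, by rw [hgi j h]; exact hj, fun l hl => (hgi l (h.trans hl)).trans (hgj l hl)⟩
  · subst h; exact ⟨i, hi.trans hj, fun l hl => (hgi l hl).trans (hgj l hl)⟩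
  · exact ⟨i, by rw [← hgj i h]; exact hi, fun l hl => (hgi l hl).trans (hgj l (h.trans hl))⟩

lemma lexLt_total' {η δ : Exp n} (h : η ≠ δ) : lexLt η δ ∨ lexLt δ η := by
  classical
  set T := (η.support ∪ δ.support).filter (fun j => η j ≠ δ j) with hT
  have hne : T.Nonempty := by
    obtain ⟨j, hj⟩ := Finsupp.ne_iff.mp h
    refine ⟨j, Finset.mem_filter.mpr ⟨Finset.mem_union.mpr ?_, hj⟩⟩
    by_cases h0 : η j = 0
    · exact Or.inr (Finsupp.mem_support_iff.mpr (fun h1 => hj (by rw [h0, h1])))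
    · exact Or.inl (Finsupp.mem_support_iff.mpr h0)
  set i := T.max' hne with hidef
  have hi : η i ≠ δ i := (Finset.mem_filter.mp (T.max'_mem hne)).2
  have hgt : ∀ j, i < j → η j = δ j := by
    intro j hj
    by_contra hne'
    have hjT : j ∈ T := by
      refine Finset.mem_filter.mpr ⟨Finset.mem_union.mpr ?_, hne'⟩
      by_cases h0 : η j = 0
      · exact Or.inr (Finsupp.mem_support_iff.mpr (fun h1 => hne' (by rw [h0, h1])))
      · exact Or.inl (Finsupp.mem_support_iff.mpr h0)
    exact absurd (T.le_max' j hjT) (not_le.mpr hj)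
  rcases lt_or_gt_of_ne hi with h1 | h1
  · exact Or.inl ⟨i, h1, hgt⟩
  · exact Or.inr ⟨i, h1, fun j hj => (hgt j hj).symm⟩

lemma exists_lexLt_max (D : Finset (Exp n)) (hD : D.Nonempty) :
    ∃ m ∈ D, ∀ x ∈ D, ¬ lexLt m x := by
  classical
  induction D using Finset.induction_on with
  | empty => exact absurd hD (by simp)
  | @insert a D' ha ih =>
    rcases D'.eq_empty_or_nonempty with rfl | hD'
    · exact ⟨a, Finset.mem_insert_self a _, by
        intro x hx
        rw [Finset.mem_insert] at hx
        rcases hx with rfl | hx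
        · exact lexLt_irrefl' x
        · simp at hx⟩
    · obtain ⟨m, hmD, hmax⟩ := ih hD'
      by_cases hma : lexLt m a
      · refine ⟨a, Finset.mem_insert_self a _, ?_⟩
        intro x hx hax
        rcases Finset.mem_insert.mp hx with rfl | hx
        · exact lexLt_irrefl' x hax
        · exact hmax x hx (lexLt_trans' hma hax)
      · refine ⟨m, Finset.mem_insert_of_mem hmD, ?_⟩
        intro x hx hmx
        rcases Finset.mem_insert.mp hx with rfl | hx
        · exact hma hmx
        · exact hmax x hx hmx

lemma mem_of_mem_pbasis {P : Finset (Exp n)} {T : Set (Exp n)}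
    (hB : IsPommaretBasis P T) {α : Exp n} (hα : α ∈ P) : α ∈ T :=
  (hB.1 α).mpr ⟨α, hα, 0, fun i hi => by simp at hi, by simp⟩

/-- Key lemma: if `η + α = δ + β` with `η` multiplicative for `α ∈ P` and `β ∉ T`,
then `η <_lex δ`. -/
lemma key_lex {P : Finset (Exp n)} {T : Set (Exp n)} (hB : IsPommaretBasis P T)
    {α η δ β : Exp n} (hα : α ∈ P) (hη : multExp α η) (hβ : β ∉ T)
    (heq : η + α = δ + β) : lexLt η δ := by
  have hne : η ≠ δ := by
    rintro rfl
    have hab : α = β := add_left_cancel heq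
    exact hβ (hab ▸ mem_of_mem_pbasis hB hα)
  rcases lexLt_total' hne with h | h
  · exact h
  · exfalso
    obtain ⟨i, hi, hgt⟩ := h
    -- hi : δ i < η i, hgt : ∀ j, i < j → δ j = η j
    have hiη : i ∈ η.support :=
      Finsupp.mem_support_iff.mpr (by omega)
    have hmul : mult α i := hη i hiη
    have hα0 : ∀ j, j < i → α j = 0 := by
      intro j hj
      by_contra h0
      exact absurd (hmul j (Finsupp.mem_support_iff.mpr h0)) (not_le.mpr hj)
    have happ : ∀ j, η j + α j = δ j + β j := by
      intro j
      have := DFunLike.congr_fun heq j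
      simpa [Finsupp.add_apply] using this
    have hge : ∀ j, α j ≤ β j := by
      intro j
      rcases lt_trichotomy j i with hj | rfl | hj
      · rw [hα0 j hj]; exact Nat.zero_le _
      · have := happ j; omega
      · have := happ j; have := hgt j hj; omega
    have hβeq : β = α + (β - α) := by
      ext j
      simp only [Finsupp.add_apply, Finsupp.tsub_apply]
      have := hge j; omega
    have hγ : multExp α (β - α) := by
      intro j hj
      have hj0 : β j - α j ≠ 0 := by
        simpa [Finsupp.tsub_apply] using Finsupp.mem_support_iff.mp hj
      have hji : j ≤ i := by
        by_contra hji
        push_neg at hji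
        have h1 := happ j
        have h2 := hgt j hji
        omega
      intro j' hj'
      exact hji.trans (hmul j' hj')
    exact hβ ((hB.1 β).mpr ⟨α, hα, β - α, hγ, hβeq⟩)

end Aux

/-- Corollary `notzero`: a nontrivial `A`-linear combination of pairwise
distinct elements of `G^(s)` is nonzero and does not lie in `⟨N(U)⟩^A`. -/
theorem statement4 {n : ℕ} {κ : Type*} [Fintype κ] [DecidableEq κ] (hm : Nonempty κ)
    {A : Type*} [CommRing A] [IsNoetherianRing A]
    (d : κ → ℤ) (J : κ → Set (Exp n)) (P : κ → Finset (Exp n))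
    (hQS : ∀ k, IsMonomialIdeal (J k) ∧ IsPommaretBasis (P k) (J k))
    (gb : Exp n → κ → (κ → MvPolynomial (Fin (n+1)) A))
    (hG : IsMarkedSetV d J P gb) (s : ℤ)
    (c : (κ → MvPolynomial (Fin (n+1)) A) →₀ A) (hc : c ≠ 0)
    (hsupp : ↑c.support ⊆ GSdeg d P gb s) :
    (c.sum fun v a => a • v) ≠ 0 ∧
    (c.sum fun v a => a • v) ∉ Submodule.span A (NUTerms A J) := by
  classical
  have H : ∀ v ∈ c.support, ∃ k, ∃ α, α ∈ P k ∧ ∃ δ : Exp n, multExp α δ ∧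
      (degE δ : ℤ) + (degE α : ℤ) + d k = s ∧ v = (monomial δ (1:A)) • gb α k := by
    intro v hv
    exact hsupp hv
  choose kf αf hαf δf hmulf hdegf hvf using H
  have hcs : c.support.Nonempty := Finsupp.support_nonempty_iff.mpr hc
  have hattach : c.support.attach.Nonempty := Finset.attach_nonempty_iff.mpr hcs
  set D : Finset (Exp n) :=
    c.support.attach.image (fun v : {x // x ∈ c.support} => δf v.1 v.2) with hDdef
  have hDne : D.Nonempty := hattach.image _
  obtain ⟨m, hmD, hmax⟩ := exists_lexLt_max D hDne
  obtain ⟨v₀, -, hδ₀⟩ := Finset.mem_image.mp hmD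
  set k₀ := kf v₀.1 v₀.2 with hk₀
  set α₀ := αf v₀.1 v₀.2 with hα₀def
  set δ₀ := δf v₀.1 v₀.2 with hδ₀def
  have hα₀P : α₀ ∈ P k₀ := hαf v₀.1 v₀.2
  have hmul₀ : multExp α₀ δ₀ := hmulf v₀.1 v₀.2
  set γ₀ : Exp n := δ₀ + α₀ with hγ₀def
  have hmax' : ∀ (v : κ → MvPolynomial (Fin (n+1)) A) (hv : v ∈ c.support),
      ¬ lexLt δ₀ (δf v hv) := by
    intro v hv
    have : δf v hv ∈ c.support.attach.image (fun v => δf v.1 v.2) :=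
      Finset.mem_image.mpr ⟨⟨v, hv⟩, Finset.mem_attach _ _, rfl⟩
    rw [← hδ₀] at hmax
    exact hmax _ this
  -- package the chosen data so that the witnesses become opaque variables
  have hrec : ∀ (v : κ → MvPolynomial (Fin (n+1)) A), v ∈ c.support →
      ∃ k α δ, α ∈ P k ∧ multExp α δ ∧ v = (monomial δ (1:A)) • gb α k ∧
        ¬ lexLt δ₀ δ ∧ (v = v₀.1 → (k = k₀ ∧ α = α₀ ∧ δ = δ₀)) := by
    intro v hv
    refine ⟨kf v hv, αf v hv, δf v hv, hαf v hv, hmulf v hv, hvf v hv, hmax' v hv, ?_⟩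
    intro hvv
    subst hvv
    exact ⟨rfl, rfl, rfl⟩
  -- the key coefficient computation
  have hcoeff : ∀ (v : κ → MvPolynomial (Fin (n+1)) A), v ∈ c.support →
      MvPolynomial.coeff γ₀ (v k₀) = if v = v₀.1 then 1 else 0 := by
    intro v hv
    obtain ⟨k, α, δ, hαP, hmul, hveq, hnlex, hident⟩ := hrec v hv
    have hvk₀ : v k₀ = monomial δ (1:A) * (gb α k k₀) := by
      rw [hveq]; rfl
    have hdecomp : gb α k k₀ =
        monomial δ (1:A) * ((gb α k - termV A α k) k₀) + termV A α k k₀ →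
        True := fun _ => trivial
    have hsplit : v k₀ = monomial δ (1:A) * ((gb α k - termV A α k) k₀)
        + monomial δ (1:A) * (termV A α k k₀) := by
      rw [hvk₀, ← mul_add]
      congr 1
      simp [Pi.sub_apply]
    rw [hsplit, MvPolynomial.coeff_add]
    have htail : MvPolynomial.coeff γ₀
        (monomial δ (1:A) * ((gb α k - termV A α k) k₀)) = 0 := by
      rw [MvPolynomial.coeff_monomial_mul']
      split_ifs with hle
      · rw [one_mul]
        by_contra h0
        have hβmem : γ₀ - δ ∈ ((gb α k - termV A α k) k₀).support :=
          Finsupp.mem_support_iff.mpr h0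
        have hβJ : γ₀ - δ ∉ J k₀ := (hG k α hαP k₀ _ hβmem).1
        have heq : δ₀ + α₀ = δ + (γ₀ - δ) := by
          rw [← hγ₀def]
          ext j
          have hlej : δ j ≤ γ₀ j := Finsupp.le_def.mp hle j
          simp only [Finsupp.add_apply, Finsupp.tsub_apply]
          omega
        exact hnlex (key_lex (hQS k₀).2 hα₀P hmul₀ hβJ heq)
      · rfl
    rw [htail, zero_add]
    by_cases hkk : k = k₀
    · rw [hkk] at hveq hαP ⊢
      have hterm : termV A α k₀ k₀ = monomial α (1:A) := by
        simp [termV, Pi.single_apply]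
      rw [hterm]
      have : monomial δ (1:A) * monomial α (1:A) = monomial (δ + α) (1:A) := by
        rw [MvPolynomial.monomial_mul, one_mul]
      rw [this, MvPolynomial.coeff_monomial]
      by_cases hvv : v = v₀.1
      · obtain ⟨-, hαeq, hδeq⟩ := hident hvv
        rw [if_pos hvv, if_pos]
        rw [hαeq, hδeq, hγ₀def]
      · rw [if_neg hvv, if_neg]
        intro heq
        have hγcone : γ₀ ∈ pommaretCone α := ⟨δ, hmul, by rw [← heq, add_comm]⟩
        have hγcone₀ : γ₀ ∈ pommaretCone α₀ := ⟨δ₀, hmul₀, add_comm δ₀ α₀⟩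
        have hαeq : α = α₀ := (hQS k₀).2.2 γ₀ α hαP α₀ hα₀P hγcone hγcone₀
        have hδeq : δ = δ₀ := by
          have h2 : δ + α = δ₀ + α₀ := by rw [heq, hγ₀def]
          rw [hαeq] at h2
          exact add_right_cancel h2
        apply hvv
        rw [hveq, hδeq, hαeq, hvf v₀.1 v₀.2, ← hk₀, ← hα₀def, ← hδ₀def]
    · have hterm : termV A α k k₀ = 0 := by
        simp [termV, Pi.single_apply, Ne.symm hkk]
      rw [hterm, mul_zero, MvPolynomial.coeff_zero, if_neg]
      intro hvv
      exact hkk (hident hvv).1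
  -- the total coefficient
  have hsum : MvPolynomial.coeff γ₀ ((c.sum fun v a => a • v) k₀) = c v₀.1 := by
    rw [Finsupp.sum, Finset.sum_apply, MvPolynomial.coeff_sum]
    have : ∀ v ∈ c.support,
        MvPolynomial.coeff γ₀ ((c v • v) k₀) = if v = v₀.1 then c v else 0 := by
      intro v hv
      rw [Pi.smul_apply, MvPolynomial.coeff_smul, hcoeff v hv]
      split_ifs <;> simp
    rw [Finset.sum_congr rfl this, Finset.sum_ite_eq' c.support v₀.1 (fun v => c v),
      if_pos v₀.2]
  have hc₀ : c v₀.1 ≠ 0 := Finsupp.mem_support_iff.mp v₀.2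
  have hγ₀J : γ₀ ∈ J k₀ :=
    ((hQS k₀).2.1 γ₀).mpr ⟨α₀, hα₀P, δ₀, hmul₀, add_comm δ₀ α₀⟩
  constructor
  · intro h0
    rw [h0] at hsum
    simp at hsum
    exact hc₀ hsum.symm
  · intro hmem
    have : MvPolynomial.coeff γ₀ ((c.sum fun v a => a • v) k₀) = 0 := by
      refine Submodule.span_induction ?_ ?_ ?_ ?_ hmem
      · rintro x ⟨k, α, hαJ, rfl⟩
        by_cases hkk : k = k₀
        · rw [hkk] at hαJ ⊢
          have : termV A α k₀ k₀ = monomial α (1:A) := by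
            simp [termV, Pi.single_apply]
          rw [this, MvPolynomial.coeff_monomial, if_neg]
          rintro rfl
          exact hαJ hγ₀J
        · have : termV A α k k₀ = 0 := by
            simp [termV, Pi.single_apply, Ne.symm hkk]
          rw [this, MvPolynomial.coeff_zero]
      · simp
      · intro x y _ _ hx hy
        rw [Pi.add_apply, MvPolynomial.coeff_add, hx, hy, add_zero]
      · intro a x _ hx
        rw [Pi.smul_apply, MvPolynomial.coeff_smul, hx, smul_zero]
    rw [hsum] at this
    exact hc₀ this

end MB
end

section
/- Let U ⊆ S^m_d be a quasi-stable monomial module and G a P(U)-marked set. Then for every degree s the degree-s component of the S-module ⟨G⟩ generated by G decomposes as an A-module direct sum ⟨G⟩_s = ⟨G^{(s)}⟩^A ⊕ N(U,⟨G⟩)_s, where N(U,⟨G⟩) = ⟨G⟩ ∩ ⟨N(U)⟩. -/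
/-!
Write a term `x^γ e_l` of `U` as `x^δ x^α e_l` with `x^α ∈ P(U)` and `x^δ` multiplicative
for `x^α`, and replace it by `x^δ f_α` minus `x^δ` times the tail of `f_α`. A tail term
`x^δ x^β e_j` that again lies in `U` has a Pommaret multiplier that is lexicographically
(with `x_n` most significant) smaller than `x^δ`, so this reduction terminates and every
element of `(S^m_d)_s` lies in `⟨G^(s)⟩^A + ⟨N(U)⟩^A`; for an element of `⟨G⟩_s` the second
summand then lies in `⟨G⟩ ∩ ⟨N(U)⟩`. The sum is direct: in a nonzero `A`-combination of the
`x^δ f_α`, the head term `x^δ x^α e_k` of a summand with lexicographically largest `x^δ` cannot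
cancel, being neither the head term of another summand (Pommaret cones are disjoint) nor a
tail term of one (by the same lexicographic argument). As it lies in `U`, the combination is
not in `⟨N(U)⟩`.
-/


open MvPolynomial

namespace MB

variable {n : ℕ}

section

variable {n : ℕ} {κ : Type*} [DecidableEq κ] {A : Type*} [CommRing A]
  {d : κ → ℤ} {J : κ → Set (Exp n)} {P : κ → Finset (Exp n)}
  {gb : Exp n → κ → (κ → MvPolynomial (Fin (n+1)) A)}

/-- `lexLt` transported to `Pi.Lex` by reversing the indices, where it is a well-founded
linear order. -/
noncomputable def revLex (δ : Exp n) : Lex (Fin (n+1) → ℕ) := toLex fun i => δ i.rev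

lemma revLex_injective : Function.Injective (revLex (n := n)) := by
  intro δ η h
  ext i
  simpa using congrFun (toLex.injective h) i.rev

lemma lexLt_of_revLex_lt {δ η : Exp n} (h : revLex δ < revLex η) : lexLt δ η := by
  obtain ⟨i, hup, hi⟩ := h
  refine ⟨i.rev, by simpa [revLex] using hi, fun j hj => ?_⟩
  simpa [revLex] using hup j.rev (by simpa using Fin.rev_lt_rev.mpr hj)

lemma degE_add (α β : Exp n) : degE (α + β) = degE α + degE β := by
  simp [degE, Finsupp.sum_add_index']

lemma self_mem_pommaretCone (α : Exp n) : α ∈ pommaretCone α :=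
  ⟨0, by simp [multExp], by simp⟩

lemma IsPommaretBasis.mem_of_mem_pommaretCone {P : Finset (Exp n)} {T : Set (Exp n)}
    (hP : IsPommaretBasis P T) {α γ : Exp n} (hα : α ∈ P) (hγ : γ ∈ pommaretCone α) : γ ∈ T :=
  (hP.1 γ).mpr ⟨α, hα, hγ⟩

/-- If `η ≤ δ`, then `β ≥ α` and `β` differs from `α` only in multiplicative variables of
`x^α`, which puts `x^β` in the Pommaret cone of `x^α`. -/
lemma revLex_lt_of_add_eq {P : Finset (Exp n)} {T : Set (Exp n)} (hP : IsPommaretBasis P T)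
    {α δ η β : Exp n} (hα : α ∈ P) (hδ : multExp α δ) (heq : δ + α = η + β) (hβ : β ∉ T) :
    revLex δ < revLex η := by
  by_contra hle
  rcases (not_lt.mp hle).lt_or_eq with hlt | hηδ
  · obtain ⟨i, hi, hup⟩ := lexLt_of_revLex_lt hlt
    have hcoord : ∀ j, δ j + α j = η j + β j := fun j => by simpa using DFunLike.congr_fun heq j
    have hi_mult : mult α i := hδ i (Finsupp.mem_support_iff.mpr (by omega))
    have hα_low : ∀ j < i, α j = 0 := fun j hj =>
      by_contra fun hne => (hi_mult j (Finsupp.mem_support_iff.mpr hne)).not_gt hj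
    have hαβ : α ≤ β := fun j => by
      rcases lt_trichotomy j i with hj | rfl | hj
      · simp [hα_low j hj]
      · have := hcoord j; omega
      · have := hcoord j; have := hup j hj; omega
    have hmult : multExp α (β - α) := fun j hj l hl => by
      refine le_trans ?_ (hi_mult l hl)
      by_contra! hij
      have hj : β j - α j ≠ 0 := by simpa using hj
      have := hcoord j; have := hup j hij; omega
    exact hβ (hP.mem_of_mem_pommaretCone hα ⟨β - α, hmult, (add_tsub_cancel_of_le hαβ).symm⟩)
  · obtain rfl := revLex_injective hηδ
    obtain rfl := add_left_cancel heq
    exact hβ (hP.mem_of_mem_pommaretCone hα (self_mem_pommaretCone α))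

lemma monomial_smul_termV (δ α : Exp n) (k : κ) :
    monomial δ (1:A) • termV A α k = termV A (δ + α) k := by
  rw [termV, termV, ← Pi.single_smul', smul_eq_mul, monomial_mul, one_mul]

lemma sum_termV [Fintype κ] (f : κ → MvPolynomial (Fin (n+1)) A) :
    ∑ l, ∑ β ∈ (f l).support, (f l).coeff β • termV A β l = f := by
  conv_rhs => rw [← Finset.univ_sum_single f]
  refine Finset.sum_congr rfl fun l _ => ?_
  conv_rhs => rw [(f l).as_sum]
  simp only [termV, ← Pi.single_smul', smul_monomial, smul_eq_mul, mul_one]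
  exact (map_sum (AddMonoidHom.single (fun _ : κ => MvPolynomial (Fin (n+1)) A) l) _ _).symm

lemma monomial_smul_mem_of_forall_support [Fintype κ]
    (Q : Submodule A (κ → MvPolynomial (Fin (n+1)) A)) (δ : Exp n)
    {f : κ → MvPolynomial (Fin (n+1)) A} (h : ∀ l, ∀ β ∈ (f l).support, termV A (δ + β) l ∈ Q) :
    monomial δ (1:A) • f ∈ Q := by
  rw [← sum_termV f]
  simp only [Finset.smul_sum, smul_comm (monomial δ (1:A)), monomial_smul_termV]
  exact Q.sum_mem fun l _ => Q.sum_mem fun β hβ => Q.smul_mem _ (h l β hβ)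

lemma mem_of_forall_support [Fintype κ] (Q : Submodule A (κ → MvPolynomial (Fin (n+1)) A))
    {f : κ → MvPolynomial (Fin (n+1)) A} (h : ∀ l, ∀ β ∈ (f l).support, termV A β l ∈ Q) :
    f ∈ Q := by
  simpa using monomial_smul_mem_of_forall_support Q 0 (by simpa using h)

lemma termV_mem_homogCompV {γ : Exp n} {l : κ} {s : ℤ}
    (h : (degE γ : ℤ) + d l = s) : termV A γ l ∈ homogCompV A d s := by
  intro j β hβ
  obtain rfl : j = l := by by_contra hj; simp [termV, Pi.single_eq_of_ne hj] at hβ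
  rw [termV, Pi.single_eq_same] at hβ
  obtain rfl : β = γ := by simpa using support_monomial_subset hβ
  exact h

lemma coeff_eq_zero_of_mem_span_NUTerms {v : κ → MvPolynomial (Fin (n+1)) A}
    (hv : v ∈ Submodule.span A (NUTerms A J)) {l : κ} {γ : Exp n} (hγ : γ ∈ J l) :
    (v l).coeff γ = 0 := by
  induction hv using Submodule.span_induction with
  | mem _ h =>
    obtain ⟨k, α, hα, rfl⟩ := h
    by_cases hl : l = k
    · subst hl
      simp only [termV, Pi.single_eq_same, coeff_monomial]
      exact if_neg fun h : α = γ => hα (h ▸ hγ)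
    · simp [termV, Pi.single_eq_of_ne hl]
  | zero => simp
  | add _ _ _ _ h₁ h₂ => simp [h₁, h₂]
  | smul _ _ _ h => simp [h]

lemma monomial_smul_gb_eq (δ α : Exp n) (k : κ) :
    monomial δ (1:A) • gb α k
      = termV A (δ + α) k + monomial δ (1:A) • (gb α k - termV A α k) := by
  rw [smul_sub, monomial_smul_termV, add_sub_cancel]

lemma monomial_smul_tail_mem [Fintype κ] (hG : IsMarkedSetV d J P gb) {k : κ} {α : Exp n}
    (hα : α ∈ P k) (δ : Exp n) (Q : Submodule A (κ → MvPolynomial (Fin (n+1)) A))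
    (hQ : ∀ j β, β ∉ J j → (degE (δ + β) : ℤ) + d j = degE (δ + α) + d k →
      termV A (δ + β) j ∈ Q) :
    monomial δ (1:A) • (gb α k - termV A α k) ∈ Q :=
  monomial_smul_mem_of_forall_support Q δ fun j β hβ => by
    obtain ⟨hβJ, hdeg⟩ := hG k α hα j β hβ
    exact hQ j β hβJ (by simp only [degE_add]; push_cast; linarith)

lemma monomial_smul_gb_mem_homogCompV [Fintype κ] (hG : IsMarkedSetV d J P gb) {k : κ}
    {α : Exp n} (hα : α ∈ P k) (δ : Exp n) :
    monomial δ (1:A) • gb α k ∈ homogCompV A d (degE (δ + α) + d k) := by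
  rw [monomial_smul_gb_eq]
  exact add_mem (termV_mem_homogCompV rfl)
    (monomial_smul_tail_mem hG hα δ _ fun _ _ _ hdeg => termV_mem_homogCompV hdeg)

lemma span_GSdeg_le_GmodDeg [Fintype κ] (hG : IsMarkedSetV d J P gb) (s : ℤ) :
    Submodule.span A (GSdeg d P gb s) ≤ GmodDeg d P gb s := by
  rw [Submodule.span_le]
  rintro _ ⟨k, α, hα, δ, -, hdeg, rfl⟩
  refine ⟨Submodule.smul_mem (GmodS P gb) _ (Submodule.subset_span ⟨k, α, hα, rfl⟩), ?_⟩
  have := monomial_smul_gb_mem_homogCompV hG hα δ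
  rwa [degE_add, Nat.cast_add, hdeg] at this

lemma termV_add_mem_of_tail_mem [Fintype κ] (hG : IsMarkedSetV d J P gb) {k : κ} {α δ : Exp n}
    (hα : α ∈ P k) (hδ : multExp α δ)
    (htail : ∀ j β, β ∉ J j → termV A (δ + β) j ∈
      Submodule.span A (GSdeg d P gb (degE (δ + β) + d j)) ⊔ Submodule.span A (NUTerms A J)) :
    termV A (δ + α) k ∈
      Submodule.span A (GSdeg d P gb (degE (δ + α) + d k)) ⊔ Submodule.span A (NUTerms A J) := by
  rw [eq_sub_of_add_eq (monomial_smul_gb_eq (gb := gb) δ α k).symm]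
  refine sub_mem (Submodule.mem_sup_left (Submodule.subset_span
    ⟨k, α, hα, δ, hδ, by rw [degE_add, Nat.cast_add], rfl⟩)) ?_
  exact monomial_smul_tail_mem hG hα δ _ fun j β hβ hdeg => hdeg ▸ htail j β hβ

/-- Rewriting a term of a Pommaret cone through the marked set only produces terms with a
`revLex`-smaller multiplier, so the reduction terminates. -/
lemma termV_add_mem_of_not_mem [Fintype κ] (hP : ∀ k, IsPommaretBasis (P k) (J k))
    (hG : IsMarkedSetV d J P gb) (δ : Exp n) :
    ∀ j β, β ∉ J j → termV A (δ + β) j ∈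
      Submodule.span A (GSdeg d P gb (degE (δ + β) + d j)) ⊔ Submodule.span A (NUTerms A J) := by
  induction δ using (InvImage.wf revLex wellFounded_lt).induction with
  | _ δ ih =>
    intro j β hβ
    by_cases hJ : δ + β ∈ J j
    · obtain ⟨α, hα, δ', hδ', hdec⟩ := ((hP j).1 _).mp hJ
      rw [add_comm α] at hdec
      have hlt := revLex_lt_of_add_eq (hP j) hα hδ' hdec.symm hβ
      rw [hdec]
      exact termV_add_mem_of_tail_mem hG hα hδ' (ih δ' hlt)
    · exact Submodule.mem_sup_right (Submodule.subset_span ⟨j, δ + β, hJ, rfl⟩)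

lemma termV_mem [Fintype κ] (hP : ∀ k, IsPommaretBasis (P k) (J k)) (hG : IsMarkedSetV d J P gb)
    (γ : Exp n) (l : κ) : termV A γ l ∈
      Submodule.span A (GSdeg d P gb (degE γ + d l)) ⊔ Submodule.span A (NUTerms A J) := by
  by_cases hJ : γ ∈ J l
  · obtain ⟨α, hα, δ, hδ, rfl⟩ := ((hP l).1 _).mp hJ
    rw [add_comm α δ]
    exact termV_add_mem_of_tail_mem hG hα hδ (termV_add_mem_of_not_mem hP hG δ)
  · exact Submodule.mem_sup_right (Submodule.subset_span ⟨l, γ, hJ, rfl⟩)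

lemma mem_sup_of_mem_homogCompV [Fintype κ] (hP : ∀ k, IsPommaretBasis (P k) (J k))
    (hG : IsMarkedSetV d J P gb) {s : ℤ} {f : κ → MvPolynomial (Fin (n+1)) A}
    (hf : f ∈ homogCompV A d s) :
    f ∈ Submodule.span A (GSdeg d P gb s) ⊔ Submodule.span A (NUTerms A J) :=
  mem_of_forall_support _ fun l β hβ => hf l β hβ ▸ termV_mem hP hG β l

lemma coeff_gb_self (hP : ∀ k, IsPommaretBasis (P k) (J k)) (hG : IsMarkedSetV d J P gb)
    {k : κ} {α : Exp n} (hα : α ∈ P k) : (gb α k k).coeff α = 1 := by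
  have htail : ((gb α k - termV A α k) k).coeff α = 0 := by
    by_contra h
    exact (hG k α hα k α (mem_support_iff.mpr h)).1
      ((hP k).mem_of_mem_pommaretCone hα (self_mem_pommaretCone α))
  simpa [termV, sub_eq_zero, coeff_monomial] using htail

lemma eq_or_not_mem_of_coeff_gb_ne_zero (hG : IsMarkedSetV d J P gb) {k l : κ}
    {α β : Exp n} (hα : α ∈ P k) (h : (gb α k l).coeff β ≠ 0) :
    (l = k ∧ β = α) ∨ β ∉ J l := by
  by_cases htail : ((gb α k - termV A α k) l).coeff β = 0
  · left
    have hl : l = k := by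
      by_contra hl
      exact h (by simpa [termV, Pi.single_eq_of_ne hl] using htail)
    subst hl
    refine ⟨rfl, by_contra fun hβ => h ?_⟩
    simpa [termV, coeff_monomial, Ne.symm hβ] using htail
  · exact Or.inr (hG k α hα l β (mem_support_iff.mpr htail)).1

lemma coeff_monomial_smul_gb_eq_zero (hP : ∀ k, IsPommaretBasis (P k) (J k))
    (hG : IsMarkedSetV d J P gb) {k k' : κ} {α α' δ δ' : Exp n}
    (hα : α ∈ P k) (hδ : multExp α δ) (hα' : α' ∈ P k') (hδ' : multExp α' δ')
    (hle : revLex δ' ≤ revLex δ) (hne : (k', α', δ') ≠ (k, α, δ)) :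
    ((monomial δ' (1:A) • gb α' k') k).coeff (δ + α) = 0 := by
  by_contra h
  obtain ⟨hδ'le, h⟩ : δ' ≤ δ + α ∧ (gb α' k' k).coeff (δ + α - δ') ≠ 0 := by
    simpa [coeff_monomial_mul'] using h
  have hsplit : δ' + (δ + α - δ') = δ + α := add_tsub_cancel_of_le hδ'le
  rcases eq_or_not_mem_of_coeff_gb_ne_zero hG hα' h with ⟨rfl, hβ⟩ | hβ
  · rw [hβ] at hsplit
    have hcone : δ + α ∈ pommaretCone α' := ⟨δ', hδ', by rw [← hsplit, add_comm]⟩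
    obtain rfl := (hP k).2 (δ + α) α hα α' hα' ⟨δ, hδ, add_comm δ α⟩ hcone
    exact hne (by rw [add_right_cancel hsplit])
  · exact (revLex_lt_of_add_eq (hP k) hα hδ hsplit.symm hβ).not_ge hle

lemma eq_zero_of_mem_span_GSdeg (hP : ∀ k, IsPommaretBasis (P k) (J k))
    (hG : IsMarkedSetV d J P gb) {s : ℤ} {v : κ → MvPolynomial (Fin (n+1)) A}
    (hv : v ∈ Submodule.span A (GSdeg d P gb s))
    (hoff : ∀ l, ∀ γ ∈ J l, (v l).coeff γ = 0) : v = 0 := by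
  let φ : κ × Exp n × Exp n → κ → MvPolynomial (Fin (n+1)) A :=
    fun i => monomial i.2.2 (1:A) • gb i.2.1 i.1
  let I : Set (κ × Exp n × Exp n) := {i | i.2.1 ∈ P i.1 ∧ multExp i.2.1 i.2.2}
  have hGS : GSdeg d P gb s ⊆ φ '' I := by
    rintro _ ⟨k, α, hα, δ, hδ, -, rfl⟩
    exact ⟨(k, α, δ), ⟨hα, hδ⟩, rfl⟩
  obtain ⟨c, hcI, rfl⟩ :=
    (Finsupp.mem_span_image_iff_linearCombination A).mp (Submodule.span_mono hGS hv)
  by_contra hne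
  have hc : c.support.Nonempty := Finsupp.support_nonempty_iff.mpr (by rintro rfl; simp at hne)
  obtain ⟨⟨k, α, δ⟩, hi, hmax⟩ := c.support.exists_max_image (fun i => revLex i.2.2) hc
  obtain ⟨hα, hδ⟩ := hcI hi
  have hcoeff : ((Finsupp.linearCombination A φ c) k).coeff (δ + α) = c (k, α, δ) := by
    rw [Finsupp.linearCombination_apply, Finsupp.sum, Finset.sum_apply, coeff_sum,
      Finset.sum_eq_single_of_mem _ hi]
    · simp [φ, coeff_monomial_mul', coeff_gb_self hP hG hα]
    · rintro ⟨k', α', δ'⟩ hj hne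
      obtain ⟨hα', hδ'⟩ := hcI hj
      simp only [Pi.smul_apply, coeff_smul, smul_eq_mul]
      exact mul_eq_zero_of_right _
        (coeff_monomial_smul_gb_eq_zero hP hG hα hδ hα' hδ' (hmax _ hj) hne)
  exact Finsupp.mem_support_iff.mp hi
    (hcoeff ▸ hoff k _ ((hP k).mem_of_mem_pommaretCone hα ⟨δ, hδ, add_comm δ α⟩))

end

theorem statement7_general {n : ℕ} {κ : Type*} [Fintype κ] [DecidableEq κ]
    {A : Type*} [CommRing A]
    (d : κ → ℤ) (J : κ → Set (Exp n)) (P : κ → Finset (Exp n))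
    (hQS : ∀ k, IsMonomialIdeal (J k) ∧ IsPommaretBasis (P k) (J k))
    (gb : Exp n → κ → (κ → MvPolynomial (Fin (n+1)) A))
    (hG : IsMarkedSetV d J P gb) :
    ∀ s : ℤ,
      GmodDeg d P gb s
        = Submodule.span A (GSdeg d P gb s) ⊔
          ((GmodS P gb).restrictScalars A ⊓ Submodule.span A (NUTerms A J)
            ⊓ homogCompV A d s) ∧
      Submodule.span A (GSdeg d P gb s) ⊓
          ((GmodS P gb).restrictScalars A ⊓ Submodule.span A (NUTerms A J)
            ⊓ homogCompV A d s) = ⊥ := by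
  intro s
  have hP : ∀ k, IsPommaretBasis (P k) (J k) := fun k => (hQS k).2
  have hGS := span_GSdeg_le_GmodDeg hG s
  constructor
  · refine le_antisymm (fun h hh => ?_)
      (sup_le hGS (le_inf (inf_le_left.trans inf_le_left) inf_le_right))
    obtain ⟨hhG, hhs⟩ := hh
    obtain ⟨u, hu, w, hw, rfl⟩ := Submodule.mem_sup.mp (mem_sup_of_mem_homogCompV hP hG hhs)
    obtain ⟨huG, hus⟩ := hGS hu
    refine Submodule.mem_sup.mpr ⟨u, hu, w, ⟨⟨?_, hw⟩, ?_⟩, rfl⟩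
    · simpa using sub_mem hhG huG
    · simpa using sub_mem hhs hus
  · refine eq_bot_iff.mpr fun v hv => (Submodule.mem_bot A).mpr ?_
    obtain ⟨hvG, ⟨-, hvN⟩, -⟩ := hv
    exact eq_zero_of_mem_span_GSdeg hP hG hvG fun l γ hγ =>
      coeff_eq_zero_of_mem_span_NUTerms hvN hγ

/-- Theorem `markedSetChar` (iv): `⟨G⟩_s = ⟨G^(s)⟩^A ⊕ N(U,⟨G⟩)_s`. -/
theorem statement7 {n : ℕ} {κ : Type*} [Fintype κ] [DecidableEq κ] (hm : Nonempty κ)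
    {A : Type*} [CommRing A] [IsNoetherianRing A]
    (d : κ → ℤ) (J : κ → Set (Exp n)) (P : κ → Finset (Exp n))
    (hQS : ∀ k, IsMonomialIdeal (J k) ∧ IsPommaretBasis (P k) (J k))
    (gb : Exp n → κ → (κ → MvPolynomial (Fin (n+1)) A))
    (hG : IsMarkedSetV d J P gb) :
    ∀ s : ℤ,
      GmodDeg d P gb s
        = Submodule.span A (GSdeg d P gb s) ⊔
          ((GmodS P gb).restrictScalars A ⊓ Submodule.span A (NUTerms A J)
            ⊓ homogCompV A d s) ∧
      Submodule.span A (GSdeg d P gb s) ⊓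
          ((GmodS P gb).restrictScalars A ⊓ Submodule.span A (NUTerms A J)
            ⊓ homogCompV A d s) = ⊥ :=
  statement7_general d J P hQS gb hG

end MB
end
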